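/- arXiv:2202.13370 — 2 statements merged into one kernel-verified Lean document; each statement's English description precedes it below -/
import Mathlib

section
/- Let C be a spherical code in V_r with dist(C) = 2r. Then there exists a spherical code C′ in V_r such that: (1) |C′| = |C| and dist(C′) = 2r; (2) every U ∈ C′ satisfies πU = U ∩ πV_r (i.e. every element of C′ is a free R-submodule of V_r). -/
/-! Since `nmin π U₁ U₂ ≤ r` always, `dist(C) = 2r` says exactly that `π^{r-1} U₁ ⊄ U₂` for all
distinct `U₁, U₂ ∈ C`, and this survives replacing every `U` by a submodule `F ≤ U` with
`π^{r-1} F = π^{r-1} U`. For `F` take the span of lifts to `U` of a minimal generating family of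
`π^{r-1} U`. An element of `F ∩ πV` is killed by `π^{r-1}`, so its coefficients give a relation
among those generators; by minimality they lie in `𝔪 = (π)`, whence `F ∩ πV = πF`. Membership in
the boundary survives because `π^{r-1} u ≠ 0` for every `u ∉ πV`, `V` being free. -/

open Pointwise

namespace SphericalSubmoduleCodes

variable {R : Type*} [CommRing R] {V : Type*} [AddCommGroup V] [Module R V]

/-- `nmin π U₁ U₂ = min {m ≥ 0 : π^m U₁ ⊆ U₂}`. -/
noncomputable def nmin (π : R) (U₁ U₂ : Submodule R V) : ℕ :=
  sInf {m : ℕ | (π ^ m) • U₁ ≤ U₂}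

/-- The distance `dist(U₁,U₂) = min{m : π^m U₁ ⊆ U₂} + min{n : π^n U₂ ⊆ U₁}`
(used for boundary submodules, where `Ũ = U`). -/
noncomputable def distMod (π : R) (U₁ U₂ : Submodule R V) : ℕ :=
  nmin π U₁ U₂ + nmin π U₂ U₁

/-- `m_U = max {0 ≤ m ≤ r : U ⊆ π^m V}`. -/
noncomputable def mExp (π : R) (r : ℕ) (U : Submodule R V) : ℕ :=
  sSup {m : ℕ | m ≤ r ∧ U ≤ (π ^ m) • (⊤ : Submodule R V)}

/-- `Ũ`, the unique maximal submodule with `π^{m_U} Ũ = U`: the kernel of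
`x ↦ π^{m_U} x + U`. -/
noncomputable def tilde (π : R) (r : ℕ) (U : Submodule R V) : Submodule R V :=
  U.comap ((π ^ mExp π r U) • (LinearMap.id : V →ₗ[R] V))

/-- The boundary `∂L(V_r) = {U : π^{r-1} V ⊄ U and U ⊄ π V}`. -/
def boundary (π : R) (r : ℕ) : Set (Submodule R V) :=
  {U | ¬ ((π ^ (r - 1)) • (⊤ : Submodule R V) ≤ U) ∧ ¬ (U ≤ π • (⊤ : Submodule R V))}

/-- The minimum distance of a code of (boundary) submodules. -/
noncomputable def minDist (π : R) (C : Set (Submodule R V)) : ℕ :=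
  sInf {n : ℕ | ∃ U₁ ∈ C, ∃ U₂ ∈ C, U₁ ≠ U₂ ∧ distMod π U₁ U₂ = n}

/-- homothety: `U ∼ U' ↔ Ũ = Ũ'`. -/
noncomputable def homSetoid (π : R) (r : ℕ) : Setoid (Submodule R V) :=
  Setoid.ker (tilde π r)

/-- The distance on homothety classes. -/
noncomputable def distClass (π : R) (r : ℕ) :
    Quotient (homSetoid (V := V) π r) → Quotient (homSetoid (V := V) π r) → ℕ :=
  Quotient.lift₂
    (fun U₁ U₂ => nmin π (tilde π r U₁) (tilde π r U₂) + nmin π (tilde π r U₂) (tilde π r U₁))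
    (by
      intro a₁ b₁ a₂ b₂ h₁ h₂
      have ha : tilde π r a₁ = tilde π r a₂ := h₁
      have hb : tilde π r b₁ = tilde π r b₂ := h₂
      simp only [ha, hb])

/-- The Grassmannian: free rank-`n` submodules. -/
def Grass (R : Type*) [CommRing R] {V : Type*} [AddCommGroup V] [Module R V]
    (n : ℕ) : Set (Submodule R V) :=
  {U | Module.Free R U ∧ Module.finrank R U = n}

/-- `binom(a,b)_X = ∏_{i=0}^{b-1} (1 - X^{a-i})/(1 - X^{b-i})`. -/
def qbinom (X : ℚ) (a b : ℕ) : ℚ :=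
  ∏ i ∈ Finset.range b, (1 - X ^ (a - i)) / (1 - X ^ (b - i))

end SphericalSubmoduleCodes

namespace SphericalSubmoduleCodes

section LocalRing

variable {R : Type*} [CommRing R] [IsLocalRing R] {V : Type*} [AddCommGroup V] [Module R V]

open IsLocalRing Submodule

theorem mem_maximalIdeal_of_sum_smul_eq_zero {ι : Type*} [Fintype ι] {v : ι → V}
    (hv : (span R (Set.range v)).spanFinrank = Fintype.card ι) {c : ι → R}
    (hc : ∑ j, c j • v j = 0) (i : ι) : c i ∈ maximalIdeal R := by
  classical
  by_contra hci
  set s : Finset V := (Finset.univ.erase i).image v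
  have hvi : v i ∈ span R (s : Set V) := by
    have hrel : c i • v i = -∑ j ∈ Finset.univ.erase i, c j • v j := by
      rw [eq_neg_iff_add_eq_zero,
        Finset.add_sum_erase _ (fun j => c j • v j) (Finset.mem_univ i), hc]
    rw [← smul_mem_iff_of_isUnit _ (notMem_maximalIdeal.1 hci), hrel]
    exact neg_mem (sum_mem fun j hj => smul_mem _ _ (subset_span (Finset.mem_image_of_mem v hj)))
  have hspan : span R (Set.range v) = span R (s : Set V) := by
    refine le_antisymm (span_le.2 (Set.range_subset_iff.2 fun j => ?_))
      (span_mono (by simp [s]))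
    by_cases hj : j = i
    · exact hj ▸ hvi
    · exact subset_span (Finset.mem_image_of_mem v (Finset.mem_erase.2 ⟨hj, Finset.mem_univ j⟩))
  have hle := spanFinrank_span_le_ncard_of_finite (R := R) s.finite_toSet
  rw [← hspan, hv, Set.ncard_coe_finset] at hle
  have hlt : s.card < Fintype.card ι :=
    Finset.card_image_le.trans_lt (Finset.card_erase_lt_of_mem (Finset.mem_univ i))
  omega

theorem exists_le_smul_eq_and_smul_eq_inf {π q : R} (hmax : maximalIdeal R = Ideal.span {π})
    (hπq : π * q = 0) (U : Submodule R V) (hU : (q • U).FG) :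
    ∃ F ≤ U, q • F = q • U ∧ π • F = F ⊓ π • (⊤ : Submodule R V) := by
  obtain ⟨t, htcard, htspan⟩ := hU.exists_span_finset_card_eq_spanFinrank
  have hlift : ∀ g : t, ∃ x ∈ U, q • x = g := fun g =>
    (mem_smul_pointwise_iff_exists _ _ _).1 (htspan ▸ subset_span g.2)
  choose x hxU hxq using hlift
  have hqx : q • Set.range x = t := by
    rw [Set.smul_set_range, funext hxq, Subtype.range_coe]
  refine ⟨span R (Set.range x), span_le.2 (Set.range_subset_iff.2 hxU), ?_, ?_⟩
  · rw [smul_span, hqx, htspan]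
  refine le_antisymm (le_inf (smul_le_self_of_tower _ _) (smul_le_smul_left _ le_top)) ?_
  rintro _ ⟨hy, hyπ⟩
  obtain ⟨c, rfl⟩ := (mem_span_range_iff_exists_fun R).1 hy
  have hrel : ∑ g : t, c g • (g : V) = 0 := by
    obtain ⟨z, -, hz⟩ := (mem_smul_pointwise_iff_exists _ _ _).1 hyπ
    have : q • ∑ g, c g • x g = 0 := by rw [← hz, smul_smul, mul_comm, hπq, zero_smul]
    simpa [Finset.smul_sum, smul_comm q, hxq] using this
  have hmin : (span R (Set.range ((↑) : t → V))).spanFinrank = Fintype.card t := by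
    simp [htspan, htcard]
  choose e he using fun g =>
    Ideal.mem_span_singleton'.1 (hmax ▸ mem_maximalIdeal_of_sum_smul_eq_zero hmin hrel g)
  have hsum : ∑ g, c g • x g = π • ∑ g, e g • x g := by
    simp [Finset.smul_sum, ← he, smul_smul, mul_comm]
  rw [hsum]
  exact smul_mem_pointwise_smul _ _ _ (sum_mem fun g _ => smul_mem _ _ (subset_span ⟨g, rfl⟩))

end LocalRing

section Basis

variable {R : Type*} [CommRing R] [IsLocalRing R] {V : Type*} [AddCommGroup V] [Module R V]
  {ι : Type*} [Fintype ι] {π : R}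

open IsLocalRing Submodule

theorem exists_isUnit_repr_of_notMem_smul_top (b : Module.Basis ι R V)
    (hmax : maximalIdeal R = Ideal.span {π}) {u : V} (hu : u ∉ π • (⊤ : Submodule R V)) :
    ∃ i, IsUnit (b.repr u i) := by
  by_contra! h
  choose e he using fun i => Ideal.mem_span_singleton'.1 (hmax ▸ (mem_maximalIdeal _).2 (h i))
  apply hu
  have hu' : ∑ i, b.repr u i • b i = π • ∑ i, e i • b i := by
    simp [Finset.smul_sum, ← he, smul_smul, mul_comm]
  rw [← b.sum_repr u, hu']
  exact smul_mem_pointwise_smul _ _ _ mem_top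

theorem smul_ne_zero_of_notMem_smul_top (b : Module.Basis ι R V)
    (hmax : maximalIdeal R = Ideal.span {π}) {a : R} (ha : a ≠ 0) {u : V}
    (hu : u ∉ π • (⊤ : Submodule R V)) : a • u ≠ 0 := by
  obtain ⟨i, hi⟩ := exists_isUnit_repr_of_notMem_smul_top b hmax hu
  intro h
  simpa [hi.mul_left_eq_zero, ha] using congr_arg (fun w => b.repr w i) h

theorem mem_boundary_of_le_of_pow_smul_eq (b : Module.Basis ι R V)
    (hmax : maximalIdeal R = Ideal.span {π}) {r : ℕ} (hr : 1 ≤ r) (hπr : π ^ r = 0)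
    (hπr' : π ^ (r - 1) ≠ 0) {U F : Submodule R V} (hU : U ∈ boundary π r) (hFU : F ≤ U)
    (hF : π ^ (r - 1) • F = π ^ (r - 1) • U) : F ∈ boundary π r := by
  refine ⟨fun h => hU.1 (h.trans hFU), fun hFπ => ?_⟩
  obtain ⟨u, huU, huπ⟩ := SetLike.not_le_iff_exists.1 hU.2
  have hkill : π ^ (r - 1) • π • (⊤ : Submodule R V) = ⊥ := by
    rw [← mul_smul, ← pow_succ, Nat.sub_add_cancel hr, hπr, zero_smul, Submodule.zero_eq_bot]
  have hu : π ^ (r - 1) • u ∈ (⊥ : Submodule R V) :=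
    hkill ▸ smul_le_smul_left _ hFπ (hF ▸ smul_mem_pointwise_smul u _ U huU)
  exact smul_ne_zero_of_notMem_smul_top b hmax hπr' huπ ((mem_bot R).1 hu)

end Basis

section Distance

variable {R : Type*} [CommRing R] {V : Type*} [AddCommGroup V] [Module R V] {π : R} {r : ℕ}
  {U₁ U₂ : Submodule R V}

theorem pow_smul_le_of_le {m n : ℕ} (hmn : m ≤ n) (h : π ^ m • U₁ ≤ U₂) : π ^ n • U₁ ≤ U₂ := by
  rw [← Nat.sub_add_cancel hmn, pow_add, mul_smul]
  exact (smul_le_smul_left _ h).trans (Submodule.smul_le_self_of_tower _ _)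

theorem nmin_le (hπr : π ^ r = 0) (U₁ U₂ : Submodule R V) : nmin π U₁ U₂ ≤ r :=
  Nat.sInf_le (show π ^ r • U₁ ≤ U₂ by simp [hπr])

theorem nmin_eq_of_not_pow_smul_le (hπr : π ^ r = 0) (h : ¬ π ^ (r - 1) • U₁ ≤ U₂) :
    nmin π U₁ U₂ = r := by
  have hmem : π ^ nmin π U₁ U₂ • U₁ ≤ U₂ :=
    Nat.sInf_mem (s := {m | π ^ m • U₁ ≤ U₂}) ⟨r, show π ^ r • U₁ ≤ U₂ by simp [hπr]⟩
  exact le_antisymm (nmin_le hπr _ _) (not_lt.1 fun hlt => h (pow_smul_le_of_le (by omega) hmem))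

theorem distMod_lt_of_pow_smul_le (hr : 1 ≤ r) (hπr : π ^ r = 0) (h : π ^ (r - 1) • U₁ ≤ U₂) :
    distMod π U₁ U₂ < 2 * r := by
  have h₁₂ : nmin π U₁ U₂ ≤ r - 1 := Nat.sInf_le h
  have h₂₁ := nmin_le hπr U₂ U₁
  rw [distMod]
  omega

theorem minDist_eq_two_mul_iff (hr : 1 ≤ r) (hπr : π ^ r = 0) {C : Set (Submodule R V)}
    (hC : C.Nontrivial) :
    minDist π C = 2 * r ↔ C.Pairwise fun U₁ U₂ => ¬ π ^ (r - 1) • U₁ ≤ U₂ := by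
  constructor
  · intro hdist U₁ h₁ U₂ h₂ hne hle
    have hmin : minDist π C ≤ distMod π U₁ U₂ := Nat.sInf_le ⟨U₁, h₁, U₂, h₂, hne, rfl⟩
    have := distMod_lt_of_pow_smul_le hr hπr hle
    omega
  · intro hsep
    have hpair : ∀ U₁ ∈ C, ∀ U₂ ∈ C, U₁ ≠ U₂ → distMod π U₁ U₂ = 2 * r := fun U₁ h₁ U₂ h₂ hne => by
      rw [distMod, nmin_eq_of_not_pow_smul_le hπr (hsep h₁ h₂ hne),
        nmin_eq_of_not_pow_smul_le hπr (hsep h₂ h₁ hne.symm), two_mul]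
    obtain ⟨U₁, h₁, U₂, h₂, hne⟩ := hC
    have hdists : {n | ∃ U₁ ∈ C, ∃ U₂ ∈ C, U₁ ≠ U₂ ∧ distMod π U₁ U₂ = n} = {2 * r} :=
      Set.eq_singleton_iff_unique_mem.2 ⟨⟨U₁, h₁, U₂, h₂, hne, hpair U₁ h₁ U₂ h₂ hne⟩,
        by rintro _ ⟨W₁, hW₁, W₂, hW₂, hW, rfl⟩; exact hpair W₁ hW₁ W₂ hW₂ hW⟩
    rw [minDist, hdists, csInf_singleton]

end Distance

theorem exists_free_code_general
    {R : Type*} [CommRing R] [Fintype R] [IsLocalRing R]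
    {V : Type*} [AddCommGroup V] [Module R V]
    (d r : ℕ) (hr : 1 ≤ r) (b : Module.Basis (Fin d) R V)
    (π : R) (hmax : IsLocalRing.maximalIdeal R = Ideal.span {π})
    (hπr : π ^ r = 0) (hπr' : π ^ (r - 1) ≠ 0)
    (C : Set (Submodule R V)) (hC : C ⊆ boundary π r) (hC2 : C.Nontrivial)
    (hdist : minDist π C = 2 * r) :
    ∃ C' : Set (Submodule R V), C' ⊆ boundary π r ∧ C'.Nontrivial ∧
      Nat.card C' = Nat.card C ∧ minDist π C' = 2 * r ∧
      ∀ U ∈ C', π • U = U ⊓ (π • (⊤ : Submodule R V)) := by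
  have : Module.Finite R V := .of_basis b
  have hπq : π * π ^ (r - 1) = 0 := by rw [← pow_succ', Nat.sub_add_cancel hr, hπr]
  choose Φ hΦU hΦq hΦfree using fun U : Submodule R V =>
    exists_le_smul_eq_and_smul_eq_inf hmax hπq U (IsNoetherian.noetherian _)
  have hsep := (minDist_eq_two_mul_iff hr hπr hC2).1 hdist
  have hsepΦ : C.Pairwise fun U₁ U₂ => ¬ π ^ (r - 1) • Φ U₁ ≤ Φ U₂ :=
    hsep.mono' fun U₁ U₂ h hle => h (hΦq U₁ ▸ hle.trans (hΦU U₂))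
  have hinj : C.InjOn Φ := fun U₁ h₁ U₂ h₂ he => by
    by_contra hne
    exact hsepΦ h₁ h₂ hne (he ▸ Submodule.smul_le_self_of_tower _ _)
  refine ⟨Φ '' C, ?_, hC2.image_of_injOn hinj, Nat.card_image_of_injOn hinj, ?_, ?_⟩
  · rintro _ ⟨U, hU, rfl⟩
    exact mem_boundary_of_le_of_pow_smul_eq b hmax hr hπr hπr' (hC hU) (hΦU U) (hΦq U)
  · exact (minDist_eq_two_mul_iff hr hπr (hC2.image_of_injOn hinj)).2 (hinj.pairwise_image.2 hsepΦ)
  · rintro _ ⟨U, -, rfl⟩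
    exact hΦfree U

/-- Every spherical code `C` in `V_r` with `dist(C) = 2r` can be replaced by a spherical
code `C'` of the same cardinality and minimum distance `2r` all of whose elements `U`
satisfy `πU = U ∩ πV_r` (i.e. are free `R`-submodules of `V_r`). -/
theorem exists_free_code
    {R : Type*} [CommRing R] [Fintype R] [IsLocalRing R]
    {V : Type*} [AddCommGroup V] [Module R V]
    (d r : ℕ) (hd : 2 ≤ d) (hr : 1 ≤ r) (b : Module.Basis (Fin d) R V)
    (π : R) (hmax : IsLocalRing.maximalIdeal R = Ideal.span {π})
    (hπr : π ^ r = 0) (hπr' : π ^ (r - 1) ≠ 0)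
    (C : Set (Submodule R V)) (hC : C ⊆ boundary π r) (hC2 : C.Nontrivial)
    (hdist : minDist π C = 2 * r) :
    ∃ C' : Set (Submodule R V), C' ⊆ boundary π r ∧ C'.Nontrivial ∧
      Nat.card C' = Nat.card C ∧ minDist π C' = 2 * r ∧
      ∀ U ∈ C', π • U = U ⊓ (π • (⊤ : Submodule R V)) :=
  exists_free_code_general d r hr b π hmax hπr hπr' C hC hC2 hdist

end SphericalSubmoduleCodes
end

section
/- Let 𝐞 = (e₁,…,e_d) be an R-basis of V_r and set, for 1 ≤ i ≤ d, U_i = Re_i, and U_{d+1} = R(e₁+⋯+e_d). Then the star configuration {U₁,…,U_d,U_{d+1}} consists of d+1 pairwise distinct boundary submodules and is a spherical code in V_r of minimum distance exactly 2r. -/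
/-!
Each of the `d + 1` generators `e₁, …, e_d, e₁ + ⋯ + e_d` is sent to `1` by a linear form
killing any other given one: a coordinate form, or a difference of two of them. So `π ^ m` times
one generator lies on the line through another only when `π ^ m = 0`, i.e. `m ≥ r`; this makes
every distance `r + r`, and the same forms show that each line is a boundary submodule.
-/

open Pointwise

namespace SphericalSubmoduleCodes

section

variable {R : Type*} [CommRing R] {V : Type*} [AddCommGroup V] [Module R V]

lemma nmin_eq_of_pow_eq_zero {π : R} {r : ℕ} {U₁ U₂ : Submodule R V} (hπr : π ^ r = 0)
    (h : ¬ (π ^ (r - 1)) • U₁ ≤ U₂) : nmin π U₁ U₂ = r := by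
  have hr : (π ^ r) • U₁ ≤ U₂ := by
    rintro _ ⟨x, -, rfl⟩
    simp [hπr]
  refine le_antisymm (Nat.sInf_le hr) (le_csInf ⟨r, hr⟩ fun m (hm : (π ^ m) • U₁ ≤ U₂) => ?_)
  by_contra! hmr
  apply h
  calc (π ^ (r - 1)) • U₁ = (π ^ (r - 1 - m)) • (π ^ m) • U₁ := by
        rw [← mul_smul, ← pow_add, Nat.sub_add_cancel (by omega)]
    _ ≤ (π ^ (r - 1 - m)) • U₂ := smul_le_smul_left _ hm
    _ ≤ U₂ := Submodule.smul_le_self_of_tower _ _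

lemma distMod_eq_of_pow_eq_zero {π : R} {r : ℕ} {U₁ U₂ : Submodule R V} (hπr : π ^ r = 0)
    (h₁₂ : ¬ (π ^ (r - 1)) • U₁ ≤ U₂) (h₂₁ : ¬ (π ^ (r - 1)) • U₂ ≤ U₁) :
    distMod π U₁ U₂ = 2 * r := by
  rw [distMod, nmin_eq_of_pow_eq_zero hπr h₁₂, nmin_eq_of_pow_eq_zero hπr h₂₁, two_mul]

lemma minDist_eq_of_forall_distMod_eq {π : R} {C : Set (Submodule R V)} {n : ℕ}
    (hC : C.Nontrivial) (h : ∀ U₁ ∈ C, ∀ U₂ ∈ C, U₁ ≠ U₂ → distMod π U₁ U₂ = n) :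
    minDist π C = n := by
  obtain ⟨U₁, hU₁, U₂, hU₂, hne⟩ := hC
  have : {m | ∃ U₁ ∈ C, ∃ U₂ ∈ C, U₁ ≠ U₂ ∧ distMod π U₁ U₂ = m} = {n} := by
    ext m
    constructor
    · rintro ⟨W₁, hW₁, W₂, hW₂, hne', rfl⟩
      exact h W₁ hW₁ W₂ hW₂ hne'
    · rintro rfl
      exact ⟨U₁, hU₁, U₂, hU₂, hne, h U₁ hU₁ U₂ hU₂ hne⟩
  rw [minDist, this, csInf_singleton]

lemma eq_zero_of_smul_mem_span_singleton {a : R} {v w : V} (f : Module.Dual R V)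
    (hv : f v = 1) (hw : f w = 0) (h : a • v ∈ Submodule.span R {w}) : a = 0 := by
  obtain ⟨c, hc⟩ := Submodule.mem_span_singleton.mp h
  simpa [hv, hw] using congrArg f hc.symm

lemma not_smul_span_singleton_le {a : R} {v w : V} (f : Module.Dual R V)
    (hv : f v = 1) (hw : f w = 0) (ha : a ≠ 0) :
    ¬ a • Submodule.span R {v} ≤ Submodule.span R {w} := by
  rw [Submodule.smul_span, Set.smul_set_singleton, Submodule.span_singleton_le_iff_mem]
  exact fun h => ha (eq_zero_of_smul_mem_span_singleton f hv hw h)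

lemma not_span_singleton_le_smul_top [Nontrivial R] {π : R} (hπ : IsNilpotent π) {w : V}
    (f : Module.Dual R V) (hw : f w = 1) :
    ¬ Submodule.span R {w} ≤ π • (⊤ : Submodule R V) := by
  intro h
  obtain ⟨y, -, hy⟩ := h (Submodule.mem_span_singleton_self w)
  have : π * f y = 1 := by simpa [hw] using congrArg f hy
  exact hπ.not_isUnit (IsUnit.of_mul_eq_one _ this)

variable (R) in
def PairwiseSeparated {ι : Type*} (u : ι → V) : Prop :=
  ∀ x y, x ≠ y → ∃ f : Module.Dual R V, f (u x) = 1 ∧ f (u y) = 0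

namespace PairwiseSeparated

variable {ι : Type*} {u : ι → V} {π : R} {r : ℕ}

lemma injective_span [Nontrivial R] (hu : PairwiseSeparated R u) :
    Function.Injective fun x => Submodule.span R {u x} := by
  intro x y hxy
  by_contra hne
  obtain ⟨f, hfx, hfy⟩ := hu x y hne
  exact not_smul_span_singleton_le f hfx hfy one_ne_zero (by rw [one_smul]; exact hxy.le)

lemma nontrivial_range_span [Nontrivial R] [Nontrivial ι] (hu : PairwiseSeparated R u) :
    (Set.range fun x => Submodule.span R {u x}).Nontrivial := by
  obtain ⟨x, y, hxy⟩ := exists_pair_ne ι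
  exact ⟨_, ⟨x, rfl⟩, _, ⟨y, rfl⟩, hu.injective_span.ne hxy⟩

lemma distMod_eq (hu : PairwiseSeparated R u) (hπr : π ^ r = 0) (hπr' : π ^ (r - 1) ≠ 0)
    {x y : ι} (hxy : x ≠ y) :
    distMod π (Submodule.span R {u x}) (Submodule.span R {u y}) = 2 * r := by
  obtain ⟨f, hfx, hfy⟩ := hu x y hxy
  obtain ⟨g, hgy, hgx⟩ := hu y x hxy.symm
  exact distMod_eq_of_pow_eq_zero hπr (not_smul_span_singleton_le f hfx hfy hπr')
    (not_smul_span_singleton_le g hgy hgx hπr')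

lemma span_mem_boundary [Nontrivial ι] (hu : PairwiseSeparated R u) (hπr : π ^ r = 0)
    (hπr' : π ^ (r - 1) ≠ 0) (x : ι) : Submodule.span R {u x} ∈ boundary π r := by
  have : Nontrivial R := nontrivial_of_ne _ _ hπr'
  obtain ⟨y, hyx⟩ := exists_ne x
  obtain ⟨f, hfy, hfx⟩ := hu y x hyx
  obtain ⟨g, hgx, -⟩ := hu x y hyx.symm
  refine ⟨fun h => ?_, not_span_singleton_le_smul_top ⟨r, hπr⟩ g hgx⟩
  exact not_smul_span_singleton_le f hfy hfx hπr' ((smul_le_smul_left _ le_top).trans h)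

lemma minDist_range_span [Nontrivial ι] (hu : PairwiseSeparated R u) (hπr : π ^ r = 0)
    (hπr' : π ^ (r - 1) ≠ 0) : minDist π (Set.range fun x => Submodule.span R {u x}) = 2 * r := by
  have : Nontrivial R := nontrivial_of_ne _ _ hπr'
  refine minDist_eq_of_forall_distMod_eq hu.nontrivial_range_span ?_
  rintro _ ⟨x, rfl⟩ _ ⟨y, rfl⟩ hne
  exact hu.distMod_eq hπr hπr' fun h => hne (h ▸ rfl)

end PairwiseSeparated

variable {d : ℕ}

noncomputable def starVector (b : Module.Basis (Fin d) R V) : Option (Fin d) → V :=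
  fun x => x.elim (∑ i, b i) b

lemma range_span_starVector (b : Module.Basis (Fin d) R V) :
    (Set.range fun x => Submodule.span R {starVector b x}) =
      (Set.range fun i => Submodule.span R {b i}) ∪ {Submodule.span R {∑ i, b i}} := by
  rw [Option.range_eq, Set.union_singleton]
  rfl

lemma pairwiseSeparated_starVector (hd : 2 ≤ d) (b : Module.Basis (Fin d) R V) :
    PairwiseSeparated R (starVector b) := by
  have hne (i : Fin d) : ∃ j, j ≠ i := Fintype.exists_ne_of_one_lt_card (by simp; omega) i
  rintro (_ | i) (_ | j) hxy
  · exact absurd rfl hxy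
  · obtain ⟨k, hk⟩ := hne j
    exact ⟨b.coord k, by simp [starVector], by simp [starVector, hk.symm]⟩
  · obtain ⟨k, hk⟩ := hne i
    exact ⟨b.coord i - b.coord k, by simp [starVector, hk.symm], by simp [starVector]⟩
  · have hij : i ≠ j := fun h => hxy (h ▸ rfl)
    exact ⟨b.coord i, by simp [starVector], by simp [starVector, hij]⟩

end

theorem star_configuration_is_spherical_general
    {R : Type*} [CommRing R]
    {V : Type*} [AddCommGroup V] [Module R V]
    (d r : ℕ) (hd : 2 ≤ d) (b : Module.Basis (Fin d) R V)
    (π : R)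
    (hπr : π ^ r = 0) (hπr' : π ^ (r - 1) ≠ 0)
    (C : Set (Submodule R V))
    (hC : C = (Set.range fun i : Fin d => Submodule.span R {b i}) ∪
      {Submodule.span R {∑ i : Fin d, b i}}) :
    Nat.card C = d + 1 ∧ C ⊆ boundary π r ∧ C.Nontrivial ∧ minDist π C = 2 * r := by
  have : Nontrivial R := nontrivial_of_ne _ _ hπr'
  have : Nontrivial (Option (Fin d)) := ⟨none, some ⟨0, by omega⟩, (Option.some_ne_none _).symm⟩
  have hu := pairwiseSeparated_starVector hd b
  rw [hC, ← range_span_starVector]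
  refine ⟨?_, ?_, hu.nontrivial_range_span, hu.minDist_range_span hπr hπr'⟩
  · rw [Nat.card_range_of_injective hu.injective_span, Nat.card_eq_fintype_card,
      Fintype.card_option, Fintype.card_fin]
  · rintro _ ⟨x, rfl⟩
    exact hu.span_mem_boundary hπr hπr' x

/-- The star configuration `{Re₁, …, Re_d, R(e₁+⋯+e_d)}` consists of `d+1` pairwise
distinct boundary submodules and is a spherical code in `V_r` of minimum distance
exactly `2r`. -/
theorem star_configuration_is_spherical
    {R : Type*} [CommRing R] [Fintype R] [IsLocalRing R]
    {V : Type*} [AddCommGroup V] [Module R V]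
    (d r : ℕ) (hd : 2 ≤ d) (hr : 1 ≤ r) (b : Module.Basis (Fin d) R V)
    (π : R) (hmax : IsLocalRing.maximalIdeal R = Ideal.span {π})
    (hπr : π ^ r = 0) (hπr' : π ^ (r - 1) ≠ 0)
    (C : Set (Submodule R V))
    (hC : C = (Set.range fun i : Fin d => Submodule.span R {b i}) ∪
      {Submodule.span R {∑ i : Fin d, b i}}) :
    Nat.card C = d + 1 ∧ C ⊆ boundary π r ∧ C.Nontrivial ∧ minDist π C = 2 * r :=
  star_configuration_is_spherical_general d r hd b π hπr hπr' C hC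

end SphericalSubmoduleCodes
end
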